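/- Let L be a solvable Lie algebra and U a subalgebra. Then Ω(U,L)_min = Π(U,L); that is, the minimal elements of Ω(U,L) are exactly the U-prefrattini subalgebras of L. In particular, the set of U-prefrattini subalgebras does not depend on the choice of chief series. -/

import Mathlib

open LieAlgebra

namespace Paper

variable {F : Type*} [Field F] {L : Type*} [LieRing L] [LieAlgebra F L]

/-- The interval `[U:L]` is complemented: every subalgebra containing `U`
has a complement over `U`. -/
def IsComplementedInterval (U : LieSubalgebra F L) : Prop :=
  ∀ S : LieSubalgebra F L, U ≤ S →
    ∃ T : LieSubalgebra F L, U ≤ T ∧ S ⊓ T = U ∧ S ⊔ T = ⊤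

/-- `Ω(U,L)`. -/
def Omega (U : LieSubalgebra F L) : Set (LieSubalgebra F L) :=
  {S | U ≤ S ∧ IsComplementedInterval S}

/-- `Ω(U,L)_min`, the inclusion-minimal elements. -/
def OmegaMin (U : LieSubalgebra F L) : Set (LieSubalgebra F L) :=
  {S | S ∈ Omega U ∧ ∀ T ∈ Omega U, T ≤ S → T = S}

/-- `φ(U,L)`, the intersection of all maximal subalgebras containing `U`. -/
def phi (U : LieSubalgebra F L) : LieSubalgebra F L :=
  sInf {M : LieSubalgebra F L | IsCoatom M ∧ U ≤ M}

/-- A subalgebra which is an ideal of `L`. -/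
def IsIdealSubalg (A : LieSubalgebra F L) : Prop :=
  ∀ x : L, ∀ a ∈ A, ⁅x, a⁆ ∈ A

/-- A minimal ideal of `L`. -/
def IsMinimalIdeal (A : LieSubalgebra F L) : Prop :=
  A ≠ ⊥ ∧ IsIdealSubalg A ∧
    ∀ B : LieSubalgebra F L, IsIdealSubalg B → B ≤ A → B = ⊥ ∨ B = A

/-- A chief series `0 = A 0 < A 1 < … < A n = L`. -/
def IsChiefSeries (A : ℕ → LieSubalgebra F L) (n : ℕ) : Prop :=
  A 0 = ⊥ ∧ A n = ⊤ ∧ (∀ i, IsIdealSubalg (A i)) ∧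
    ∀ i < n, A i < A (i + 1) ∧
      ∀ B : LieSubalgebra F L, IsIdealSubalg B → A i ≤ B → B ≤ A (i + 1) →
        B = A i ∨ B = A (i + 1)

/-- The chief factor `A/B` is `U`-Frattini. -/
def IsUFrattiniFactor (U B A : LieSubalgebra F L) : Prop :=
  A ≤ phi (U ⊔ B) ∨ U ⊔ B = ⊤

/-- `B` is a `U`-prefrattini subalgebra with respect to the series `A`. -/
def IsPrefrattiniWrt (U : LieSubalgebra F L) (A : ℕ → LieSubalgebra F L) (n : ℕ)
    (B : LieSubalgebra F L) : Prop :=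
  ∃ M : ℕ → LieSubalgebra F L,
    (∀ i < n, ¬ IsUFrattiniFactor U (A i) (A (i + 1)) →
      IsCoatom (M i) ∧ U ⊔ A i ≤ M i ∧ ¬ A (i + 1) ≤ M i) ∧
    B = ⨅ i ∈ {i | i < n ∧ ¬ IsUFrattiniFactor U (A i) (A (i + 1))}, M i

/-- `B` is a `U`-prefrattini subalgebra of `L` (with respect to some chief series). -/
def IsPrefrattini (U B : LieSubalgebra F L) : Prop :=
  ∃ (n : ℕ) (A : ℕ → LieSubalgebra F L), IsChiefSeries A n ∧ IsPrefrattiniWrt U A n B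

/-- The lower central series of an ideal `I` of `L` (computed inside `L`):
`idealLCS I k = I^{k+1}`. -/
def idealLCS (I : LieIdeal F L) : ℕ → LieIdeal F L
  | 0 => I
  | k + 1 => ⁅I, idealLCS I k⁆

/-- The nilpotent residual `L^∞`. -/
def nilpotentResidual (F : Type*) (L : Type*) [Field F] [LieRing L] [LieAlgebra F L] :
    LieIdeal F L :=
  ⨅ k, LieModule.lowerCentralSeries F L L k

/-- The exponential `exp (ad x)` truncated below `p` (all higher terms vanish when
`ad x` has nilpotency index at most `p`). -/
noncomputable def expAd (F : Type*) {L : Type*} [Field F] [LieRing L] [LieAlgebra F L]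
    (p : ℕ) (x : L) : L →ₗ[F] L :=
  ∑ r ∈ Finset.range p, (r.factorial : F)⁻¹ • ((LieAlgebra.ad F L x : Module.End F L) ^ r : Module.End F L)

/-- The quotient map `L → L ⧸ I` as a morphism of Lie algebras. -/
def quotLieHom (I : LieIdeal F L) : L →ₗ⁅F⁆ L ⧸ I :=
  { I.toSubmodule.mkQ with map_lie' := rfl }

end Paper

/-!
In a solvable Lie algebra every chief factor `K/N` is abelian. Hence a subalgebra `Y ⊇ N` with
`Y ⊔ K = L` meets `K` in an ideal, so either `Y ⊓ K = N` or `K ≤ Y`; in particular the maximal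
subalgebras containing `N` but not `K` are exactly the complements of `K/N`. Intersecting such
complements down a chief series keeps the interval above complemented, and lowers the dimension
by `dim (K/N)` at each step; so every `U`-prefrattini subalgebra lies in `Ω(U,L)`, and all of them
have the same dimension. Conversely, for `S ∈ Ω(U,L)`, complementing `S ⊔ A (i+1)` over `S`
at every factor not covered by `S ⊔ A i` yields maximal subalgebras whose intersection is a
`U`-prefrattini subalgebra inside `S`. The two descriptions of the minimal elements then agree.
-/

theorem LieIdeal.le_of_le_sup_lie_self {F L : Type*} [Field F] [LieRing L] [LieAlgebra F L]
    [IsSolvable L] {I J : LieIdeal F L}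
    (h : I ≤ J ⊔ ⁅I, I⁆) : I ≤ J := by
  have key : ∀ j, I ≤ J ⊔ derivedSeriesOfIdeal F L j I := by
    intro j
    induction j with
    | zero => exact le_sup_right
    | succ j ih =>
      set D := derivedSeriesOfIdeal F L j I
      have hJD : ⁅J ⊔ D, J ⊔ D⁆ ≤ J ⊔ ⁅D, D⁆ := by
        rw [LieSubmodule.sup_lie]
        refine sup_le ((LieSubmodule.lie_le_left J _).trans le_sup_left) ?_
        rw [LieSubmodule.lie_sup]
        exact sup_le ((LieSubmodule.lie_le_right J D).trans le_sup_left) le_sup_right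
      calc I ≤ J ⊔ ⁅I, I⁆ := h
        _ ≤ J ⊔ ⁅J ⊔ D, J ⊔ D⁆ := sup_le_sup_left (LieSubmodule.mono_lie ih ih) J
        _ ≤ J ⊔ (J ⊔ ⁅D, D⁆) := sup_le_sup_left hJD J
        _ = J ⊔ derivedSeriesOfIdeal F L (j + 1) I := by
          rw [← sup_assoc, sup_idem, derivedSeriesOfIdeal_succ]
  obtain ⟨m, hm⟩ := IsSolvable.solvable F L
  have hDm : derivedSeriesOfIdeal F L m I = ⊥ :=
    eq_bot_iff.2 (hm ▸ derivedSeriesOfIdeal_le le_top le_rfl)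
  simpa [hDm] using key m

namespace Paper

variable {F : Type*} [Field F] {L : Type*} [LieRing L] [LieAlgebra F L]

section Lattice

variable {α : Type*} [CompleteLattice α]

def tailInf (I : Set ℕ) (M : ℕ → α) (k : ℕ) : α :=
  ⨅ i ∈ {i | i ∈ I ∧ k ≤ i}, M i

variable {I : Set ℕ} {M : ℕ → α} {k : ℕ}

theorem tailInf_zero (I : Set ℕ) (M : ℕ → α) : tailInf I M 0 = ⨅ i ∈ I, M i := by
  simp [tailInf]

theorem tailInf_of_mem (hk : k ∈ I) : tailInf I M k = M k ⊓ tailInf I M (k + 1) := by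
  have : {i | i ∈ I ∧ k ≤ i} = insert k {i | i ∈ I ∧ k + 1 ≤ i} := by
    ext i
    simp only [Set.mem_ofPred_eq, Set.mem_insert_iff]
    grind
  rw [tailInf, this, iInf_insert, tailInf]

theorem tailInf_of_not_mem (hk : k ∉ I) : tailInf I M k = tailInf I M (k + 1) := by
  have : {i | i ∈ I ∧ k ≤ i} = {i | i ∈ I ∧ k + 1 ≤ i} := by
    grind
  rw [tailInf, this, tailInf]

theorem tailInf_eq_top (h : ∀ i ∈ I, i < k) : tailInf I M k = ⊤ :=
  iInf₂_eq_top.2 fun i hi => absurd (h i hi.1) (not_lt.2 hi.2)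

theorem le_tailInf {a : α} (h : ∀ i ∈ I, k ≤ i → a ≤ M i) : a ≤ tailInf I M k :=
  le_iInf₂ fun i hi => h i hi.1 hi.2

end Lattice

theorem isComplementedInterval_top : IsComplementedInterval (⊤ : LieSubalgebra F L) := by
  intro S hS
  obtain rfl := top_le_iff.1 hS
  exact ⟨⊤, le_rfl, inf_idem _, sup_idem _⟩

namespace IsIdealSubalg

variable {N Q : LieSubalgebra F L}

theorem toSubmodule_sup (hN : IsIdealSubalg N) (P : LieSubalgebra F L) :
    ((P ⊔ N : LieSubalgebra F L) : Submodule F L) = (P : Submodule F L) ⊔ N := by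
  let K : LieSubalgebra F L :=
    { toSubmodule := (P : Submodule F L) ⊔ N
      lie_mem' := by
        intro x y hx hy
        obtain ⟨p, hp, a, ha, rfl⟩ := Submodule.mem_sup.1 hx
        obtain ⟨q, hq, b, hb, rfl⟩ := Submodule.mem_sup.1 hy
        have hsplit : ⁅p + a, q + b⁆ = ⁅p, q⁆ + (⁅p + a, b⁆ - ⁅q, a⁆) := by
          rw [lie_add, add_lie, add_lie, ← lie_skew q a]
          abel
        rw [hsplit]
        exact Submodule.add_mem_sup (P.lie_mem hp hq) (sub_mem (hN _ b hb) (hN _ a ha)) }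
  refine le_antisymm ?_ (sup_le ?_ ?_)
  · exact (LieSubalgebra.toSubmodule_le_toSubmodule _ K).2
      (sup_le (fun x hx => Submodule.mem_sup_left hx) fun x hx => Submodule.mem_sup_right hx)
  · exact (LieSubalgebra.toSubmodule_le_toSubmodule _ _).2 le_sup_left
  · exact (LieSubalgebra.toSubmodule_le_toSubmodule _ _).2 le_sup_right

theorem sup_inf_assoc_of_le (hN : IsIdealSubalg N) (P : LieSubalgebra F L) (hNQ : N ≤ Q) :
    (N ⊔ P) ⊓ Q = N ⊔ P ⊓ Q := by
  refine le_antisymm ?_ (le_inf (sup_le_sup_left inf_le_left N) (sup_le hNQ inf_le_right))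
  rw [← LieSubalgebra.toSubmodule_le_toSubmodule, LieSubalgebra.inf_toSubmodule, sup_comm,
    hN.toSubmodule_sup, sup_comm, _root_.sup_inf_assoc_of_le _
      ((LieSubalgebra.toSubmodule_le_toSubmodule _ _).2 hNQ), ← LieSubalgebra.inf_toSubmodule]
  exact sup_le ((LieSubalgebra.toSubmodule_le_toSubmodule _ _).2 le_sup_left)
    ((LieSubalgebra.toSubmodule_le_toSubmodule _ _).2 le_sup_right)

theorem sup_inf_assoc_of_le' {P : LieSubalgebra F L} (hN : IsIdealSubalg N) (hPQ : P ≤ Q) :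
    (P ⊔ N) ⊓ Q = P ⊔ N ⊓ Q := by
  refine le_antisymm ?_ (le_inf (sup_le_sup_left inf_le_left P) (sup_le hPQ inf_le_right))
  rw [← LieSubalgebra.toSubmodule_le_toSubmodule, LieSubalgebra.inf_toSubmodule,
    hN.toSubmodule_sup, _root_.sup_inf_assoc_of_le _
      ((LieSubalgebra.toSubmodule_le_toSubmodule _ _).2 hPQ), ← LieSubalgebra.inf_toSubmodule]
  exact sup_le ((LieSubalgebra.toSubmodule_le_toSubmodule _ _).2 le_sup_left)
    ((LieSubalgebra.toSubmodule_le_toSubmodule _ _).2 le_sup_right)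

theorem finrank_inf_add_finrank [FiniteDimensional F L] {K M X : LieSubalgebra F L}
    (hK : IsIdealSubalg K) (hMK : M ⊔ K = ⊤) (hKX : K ≤ X) :
    Module.finrank F ((M ⊓ X : LieSubalgebra F L) : Submodule F L)
        + Module.finrank F (K : Submodule F L)
      = Module.finrank F (X : Submodule F L)
        + Module.finrank F ((M ⊓ K : LieSubalgebra F L) : Submodule F L) := by
  have hMK' : (M : Submodule F L) ⊔ K = ⊤ := by
    rw [← hK.toSubmodule_sup, hMK, LieSubalgebra.top_toSubmodule]
  have hMX : (M : Submodule F L) ⊔ X = ⊤ :=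
    eq_top_iff.2 (hMK' ▸ sup_le_sup_left ((LieSubalgebra.toSubmodule_le_toSubmodule _ _).2 hKX) _)
  have eX := Submodule.finrank_sup_add_finrank_inf_eq (M : Submodule F L) X
  have eK := Submodule.finrank_sup_add_finrank_inf_eq (M : Submodule F L) K
  rw [hMX, finrank_top] at eX
  rw [hMK', finrank_top] at eK
  rw [LieSubalgebra.inf_toSubmodule, LieSubalgebra.inf_toSubmodule]
  omega

end IsIdealSubalg

structure IsAbelianChiefFactor (N K : LieSubalgebra F L) : Prop where
  isIdeal_lower : IsIdealSubalg N
  isIdeal_upper : IsIdealSubalg K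
  lt : N < K
  eq_or_eq : ∀ B : LieSubalgebra F L, IsIdealSubalg B → N ≤ B → B ≤ K → B = N ∨ B = K
  lie_mem : ∀ {x y : L}, x ∈ K → y ∈ K → ⁅x, y⁆ ∈ N

namespace IsAbelianChiefFactor

variable {N K D M S X Y : LieSubalgebra F L}

/-- `Y ⊓ K` is normalised by `Y` and, the factor being abelian, by `K`; as `Y ⊔ K = L` it is an
ideal lying between `N` and `K`. -/
theorem inf_eq_or_le (h : IsAbelianChiefFactor N K) (hNY : N ≤ Y) (hY : Y ⊔ K = ⊤) :
    Y ⊓ K = N ∨ K ≤ Y := by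
  have hnorm : Y ⊔ K ≤ (Y ⊓ K).normalizer := by
    refine sup_le (fun x hx => ?_) (fun x hx => ?_) <;>
      refine (LieSubalgebra.mem_normalizer_iff _ x).2 fun r hr => ?_ <;>
      rw [LieSubalgebra.mem_inf] at hr ⊢
    · exact ⟨Y.lie_mem hx hr.1, h.isIdeal_upper x r hr.2⟩
    · exact ⟨hNY (h.lie_mem hx hr.2), h.lt.le (h.lie_mem hx hr.2)⟩
  have hideal : IsIdealSubalg (Y ⊓ K) := fun x r hr =>
    (LieSubalgebra.mem_normalizer_iff _ x).1 (hnorm (hY ▸ LieSubalgebra.mem_top x)) r hr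
  exact (h.eq_or_eq _ hideal (le_inf hNY h.lt.le) inf_le_right).imp_right
    fun hYK : Y ⊓ K = K => hYK ▸ inf_le_left

theorem inf_eq_of_isCoatom (h : IsAbelianChiefFactor N K) (hM : IsCoatom M) (hNM : N ≤ M)
    (hKM : ¬ K ≤ M) : M ⊓ K = N :=
  (h.inf_eq_or_le hNM (codisjoint_iff.1 (hM.not_le_iff_codisjoint.1 hKM))).resolve_right hKM

theorem isCoatom_of_inf_eq (h : IsAbelianChiefFactor N K) (hD : D ⊔ K = ⊤) (hDK : D ⊓ K = N) :
    IsCoatom D := by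
  have hND : N ≤ D := hDK ▸ inf_le_left
  refine ⟨fun hD' => h.lt.ne (by rw [← hDK, hD', top_inf_eq]), fun W hDW => ?_⟩
  have hW : W ⊔ K = ⊤ := top_le_iff.1 (hD ▸ sup_le_sup_right hDW.le K)
  rcases h.inf_eq_or_le (hND.trans hDW.le) hW with hWK | hKW
  · refine absurd ?_ hDW.ne'
    calc W = (D ⊔ K) ⊓ W := by rw [hD, top_inf_eq]
      _ = D ⊔ K ⊓ W := h.isIdeal_upper.sup_inf_assoc_of_le' hDW.le
      _ = D := by rw [inf_comm, hWK, sup_eq_left.2 hND]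
  · exact top_le_iff.1 (hW ▸ sup_le le_rfl hKW)

/-- If `T'` complements `S ⊔ K` over `X`, then `S` is complemented over `M ⊓ X` by `M ⊓ T'` or
by `M ⊓ T' ⊔ K`. -/
theorem isComplementedInterval_inf (h : IsAbelianChiefFactor N K) (hMK : M ⊔ K = ⊤)
    (hNM : N ≤ M) (hKX : K ≤ X) (hX : IsComplementedInterval X) :
    IsComplementedInterval (M ⊓ X) := by
  intro S hS
  have hXSK : X ≤ S ⊔ K :=
    calc X = (K ⊔ M) ⊓ X := by rw [sup_comm, hMK, top_inf_eq]
      _ = K ⊔ M ⊓ X := h.isIdeal_upper.sup_inf_assoc_of_le M hKX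
      _ ≤ S ⊔ K := sup_comm K (M ⊓ X) ▸ sup_le_sup_right hS K
  obtain ⟨T', hXT', hinf', hsup'⟩ := hX (S ⊔ K) hXSK
  have hKT' : K ≤ T' := hKX.trans hXT'
  set T := M ⊓ T'
  have hXT : M ⊓ X ≤ T := inf_le_inf_left M hXT'
  have hST : S ⊓ T = M ⊓ X := by
    refine le_antisymm (le_inf (inf_le_right.trans inf_le_left) ?_) (le_inf hS hXT)
    exact hinf' ▸ inf_le_inf le_sup_left inf_le_right
  have hKT : K ⊔ T = T' := by
    rw [← h.isIdeal_upper.sup_inf_assoc_of_le M hKT', sup_comm, hMK, top_inf_eq]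
  have hSTK : S ⊔ T ⊔ K = ⊤ := by
    rw [sup_assoc, sup_comm T, hKT, ← hsup', sup_assoc, sup_eq_right.2 hKT']
  have hNX : N ≤ M ⊓ X := le_inf hNM (h.lt.le.trans hKX)
  rcases h.inf_eq_or_le ((hNX.trans hS).trans le_sup_left) hSTK with hSTK' | hKST
  · refine ⟨T ⊔ K, hXT.trans le_sup_left, ?_, by rw [← sup_assoc, hSTK]⟩
    calc S ⊓ (T ⊔ K) = S ⊓ (S ⊔ T) ⊓ (T ⊔ K) := by rw [inf_sup_self]
      _ = S ⊓ ((T ⊔ K) ⊓ (S ⊔ T)) := by rw [inf_assoc, inf_comm (S ⊔ T)]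
      _ = S ⊓ T := by
          rw [h.isIdeal_upper.sup_inf_assoc_of_le' le_sup_right, inf_comm K, hSTK',
            sup_eq_left.2 (hNX.trans hXT)]
      _ = M ⊓ X := hST
  · exact ⟨T, hXT, hST, top_le_iff.1 (hSTK ▸ sup_le le_rfl hKST)⟩

/-- The complement `C` of `S ⊔ K` over `S`, enlarged by `N`, is a complement of `K/N`. -/
theorem exists_isCoatom_inf_le (h : IsAbelianChiefFactor N K) (hS : IsComplementedInterval S)
    (hK : ¬ K ≤ S ⊔ N) :
    ∃ D, IsCoatom D ∧ S ⊔ N ≤ D ∧ ¬ K ≤ D ∧ D ⊓ (S ⊔ K) ≤ S ⊔ N := by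
  obtain ⟨C, hSC, hinf, hsup⟩ := hS (S ⊔ K) le_sup_left
  have hDSK : (N ⊔ C) ⊓ (S ⊔ K) = S ⊔ N := by
    rw [h.isIdeal_lower.sup_inf_assoc_of_le C (h.lt.le.trans le_sup_right), inf_comm, hinf,
      sup_comm]
  have hKD : ¬ K ≤ N ⊔ C := fun hKD => hK (hDSK ▸ le_inf hKD le_sup_right)
  have hDK : N ⊔ C ⊔ K = ⊤ := top_le_iff.1 <| hsup ▸
    sup_le (sup_le ((hSC.trans le_sup_right).trans le_sup_left) le_sup_right)
      (le_sup_right.trans le_sup_left)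
  exact ⟨N ⊔ C, h.isCoatom_of_inf_eq hDK ((h.inf_eq_or_le le_sup_left hDK).resolve_right hKD),
    sup_le (hSC.trans le_sup_right) le_sup_left, hKD, hDSK.le⟩

end IsAbelianChiefFactor

theorem not_isUFrattiniFactor_iff {U N K : LieSubalgebra F L} :
    ¬ IsUFrattiniFactor U N K ↔ ∃ M, IsCoatom M ∧ U ⊔ N ≤ M ∧ ¬ K ≤ M := by
  constructor
  · intro h
    by_contra! hM
    exact h (Or.inl (le_sInf fun M ⟨hco, hle⟩ => hM M hco hle))
  · rintro ⟨M, hco, hle, hK⟩ (hphi | htop)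
    · exact hK (hphi.trans (sInf_le ⟨hco, hle⟩))
    · exact hco.1 (top_le_iff.1 (htop ▸ hle))

def nonFrattiniIndices (U : LieSubalgebra F L) (A : ℕ → LieSubalgebra F L) (n : ℕ) : Set ℕ :=
  {i | i < n ∧ ¬ IsUFrattiniFactor U (A i) (A (i + 1))}

theorem IsPrefrattiniWrt.exists_eq_tailInf {U B : LieSubalgebra F L} {A : ℕ → LieSubalgebra F L}
    {n : ℕ} (hB : IsPrefrattiniWrt U A n B) :
    ∃ M : ℕ → LieSubalgebra F L, (∀ i ∈ nonFrattiniIndices U A n, U ≤ M i) ∧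
      (∀ i ∈ nonFrattiniIndices U A n, IsCoatom (M i) ∧ A i ≤ M i ∧ ¬ A (i + 1) ≤ M i) ∧
      B = tailInf (nonFrattiniIndices U A n) M 0 := by
  obtain ⟨M, hM, rfl⟩ := hB
  refine ⟨M, fun i hi => le_sup_left.trans (hM i hi.1 hi.2).2.1, fun i hi => ?_,
    (tailInf_zero _ _).symm⟩
  obtain ⟨hco, hUAM, hKM⟩ := hM i hi.1 hi.2
  exact ⟨hco, le_sup_right.trans hUAM, hKM⟩

namespace IsChiefSeries

variable {A : ℕ → LieSubalgebra F L} {n : ℕ}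

theorem mono (hA : IsChiefSeries A n) {i j : ℕ} (hij : i ≤ j) (hjn : j ≤ n) : A i ≤ A j := by
  induction j, hij using Nat.le_induction with
  | base => exact le_rfl
  | succ j _ ih => exact (ih (by omega)).trans (hA.2.2.2 j (by omega)).1.le

theorem isAbelianChiefFactor [IsSolvable L] (hA : IsChiefSeries A n) {k : ℕ} (hk : k < n) :
    IsAbelianChiefFactor (A k) (A (k + 1)) where
  isIdeal_lower := hA.2.2.1 k
  isIdeal_upper := hA.2.2.1 (k + 1)
  lt := (hA.2.2.2 k hk).1
  eq_or_eq := (hA.2.2.2 k hk).2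
  lie_mem := by
    intro x y hx hy
    obtain ⟨J, hJ⟩ := (LieSubalgebra.exists_lieIdeal_coe_eq_iff F (A k)).2 (hA.2.2.1 k)
    obtain ⟨I, hI⟩ := (LieSubalgebra.exists_lieIdeal_coe_eq_iff F (A (k + 1))).2 (hA.2.2.1 (k + 1))
    have hJI : A k ≤ A (k + 1) := hA.mono k.le_succ hk
    obtain ⟨hlt, hchief⟩ := hA.2.2.2 k hk
    rw [← hJ] at hJI hlt hchief ⊢
    rw [← hI] at hJI hlt hchief hx hy
    let C : LieIdeal F L := J ⊔ ⁅I, I⁆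
    have hxy : ⁅x, y⁆ ∈ C := (le_sup_right : ⁅I, I⁆ ≤ C) (LieSubmodule.lie_mem_lie hx hy)
    rcases hchief C (fun z c hc => C.lie_mem hc) (le_sup_left : J ≤ C)
      (sup_le hJI (LieSubmodule.lie_le_left I I) : C ≤ I) with hCJ | hCI
    · exact hCJ ▸ hxy
    · exact absurd (LieIdeal.le_of_le_sup_lie_self fun z hz =>
        show z ∈ (C : LieSubalgebra F L) from hCI ▸ hz) hlt.not_ge

variable {I : Set ℕ} {M M' : ℕ → LieSubalgebra F L}

theorem apply_le_tailInf (hA : IsChiefSeries A n) (hI : ∀ i ∈ I, i < n) (hM : ∀ i ∈ I, A i ≤ M i)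
    (k : ℕ) : A k ≤ tailInf I M k :=
  le_tailInf fun i hi hki => (hA.mono hki (hI i hi).le).trans (hM i hi)

theorem isComplementedInterval_tailInf [IsSolvable L] (hA : IsChiefSeries A n)
    (hI : ∀ i ∈ I, i < n) (hM : ∀ i ∈ I, IsCoatom (M i) ∧ A i ≤ M i ∧ ¬ A (i + 1) ≤ M i)
    {k : ℕ} (hk : k ≤ n) : IsComplementedInterval (tailInf I M k) := by
  induction hk using Nat.decreasingInduction with
  | self => rw [tailInf_eq_top hI]; exact isComplementedInterval_top
  | of_succ k hk ih =>
    by_cases hkI : k ∈ I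
    · obtain ⟨hco, hAM, hAM'⟩ := hM k hkI
      rw [tailInf_of_mem hkI]
      exact (hA.isAbelianChiefFactor hk).isComplementedInterval_inf
        (codisjoint_iff.1 (hco.not_le_iff_codisjoint.1 hAM')) hAM
        (hA.apply_le_tailInf hI (fun i hi => (hM i hi).2.1) _) ih
    · rwa [tailInf_of_not_mem hkI]

theorem finrank_tailInf_add_finrank [FiniteDimensional F L] [IsSolvable L]
    (hA : IsChiefSeries A n) (hI : ∀ i ∈ I, i < n)
    (hM : ∀ i ∈ I, IsCoatom (M i) ∧ A i ≤ M i ∧ ¬ A (i + 1) ≤ M i) {k : ℕ} (hkI : k ∈ I) :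
    Module.finrank F ((tailInf I M k : LieSubalgebra F L) : Submodule F L)
        + Module.finrank F (A (k + 1) : Submodule F L)
      = Module.finrank F ((tailInf I M (k + 1) : LieSubalgebra F L) : Submodule F L)
        + Module.finrank F (A k : Submodule F L) := by
  have hfactor := hA.isAbelianChiefFactor (hI k hkI)
  obtain ⟨hco, hAM, hAM'⟩ := hM k hkI
  rw [tailInf_of_mem hkI, ← hfactor.inf_eq_of_isCoatom hco hAM hAM']
  exact hfactor.isIdeal_upper.finrank_inf_add_finrank
    (codisjoint_iff.1 (hco.not_le_iff_codisjoint.1 hAM'))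
    (hA.apply_le_tailInf hI (fun i hi => (hM i hi).2.1) _)

theorem finrank_tailInf_eq [FiniteDimensional F L] [IsSolvable L] (hA : IsChiefSeries A n)
    (hI : ∀ i ∈ I, i < n) (hM : ∀ i ∈ I, IsCoatom (M i) ∧ A i ≤ M i ∧ ¬ A (i + 1) ≤ M i)
    (hM' : ∀ i ∈ I, IsCoatom (M' i) ∧ A i ≤ M' i ∧ ¬ A (i + 1) ≤ M' i) {k : ℕ} (hk : k ≤ n) :
    Module.finrank F ((tailInf I M k : LieSubalgebra F L) : Submodule F L)
      = Module.finrank F ((tailInf I M' k : LieSubalgebra F L) : Submodule F L) := by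
  induction hk using Nat.decreasingInduction with
  | self => rw [tailInf_eq_top hI, tailInf_eq_top hI]
  | of_succ k hk ih =>
    by_cases hkI : k ∈ I
    · have := hA.finrank_tailInf_add_finrank hI hM hkI
      have := hA.finrank_tailInf_add_finrank hI hM' hkI
      omega
    · rwa [tailInf_of_not_mem hkI, tailInf_of_not_mem hkI]

variable {U : LieSubalgebra F L}

theorem prefrattini_mem_Omega [IsSolvable L] (hA : IsChiefSeries A n) {B : LieSubalgebra F L}
    (hB : IsPrefrattiniWrt U A n B) : B ∈ Omega U := by
  obtain ⟨M, hUM, hM, rfl⟩ := hB.exists_eq_tailInf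
  exact ⟨le_tailInf fun i hi _ => hUM i hi,
    hA.isComplementedInterval_tailInf (fun i hi => hi.1) hM n.zero_le⟩

theorem prefrattini_eq_of_le [FiniteDimensional F L] [IsSolvable L] (hA : IsChiefSeries A n)
    {B B' : LieSubalgebra F L} (hB : IsPrefrattiniWrt U A n B) (hB' : IsPrefrattiniWrt U A n B')
    (hle : B' ≤ B) : B' = B := by
  obtain ⟨M, -, hM, rfl⟩ := hB.exists_eq_tailInf
  obtain ⟨M', -, hM', rfl⟩ := hB'.exists_eq_tailInf
  refine LieSubalgebra.toSubmodule_injective (Submodule.eq_of_le_of_finrank_eq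
    ((LieSubalgebra.toSubmodule_le_toSubmodule _ _).2 hle) ?_)
  exact hA.finrank_tailInf_eq (fun i hi => hi.1) hM' hM n.zero_le

theorem exists_isCoatom_of_not_le_sup [IsSolvable L] (hA : IsChiefSeries A n)
    {S : LieSubalgebra F L} (hS : S ∈ Omega U) {k : ℕ} (hk : k < n)
    (hcov : ¬ A (k + 1) ≤ S ⊔ A k) : ∃ D, IsCoatom D ∧ U ⊔ A k ≤ D ∧ ¬ A (k + 1) ≤ D ∧
      D ⊓ (S ⊔ A (k + 1)) ≤ S ⊔ A k := by
  obtain ⟨D, hco, hSD, hKD, hD⟩ := (hA.isAbelianChiefFactor hk).exists_isCoatom_inf_le hS.2 hcov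
  exact ⟨D, hco, (sup_le_sup_right hS.1 _).trans hSD, hKD, hD⟩

theorem le_sup_of_not_mem_nonFrattiniIndices [IsSolvable L] (hA : IsChiefSeries A n)
    {S : LieSubalgebra F L} (hS : S ∈ Omega U) {k : ℕ} (hk : k < n)
    (hkI : k ∉ nonFrattiniIndices U A n) : A (k + 1) ≤ S ⊔ A k := by
  by_contra hcov
  obtain ⟨D, hco, hUD, hKD, -⟩ := hA.exists_isCoatom_of_not_le_sup hS hk hcov
  exact hkI ⟨hk, not_isUFrattiniFactor_iff.2 ⟨D, hco, hUD, hKD⟩⟩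

theorem exists_isCoatom_inf_sup_le [IsSolvable L] (hA : IsChiefSeries A n)
    {S : LieSubalgebra F L} (hS : S ∈ Omega U) {k : ℕ} (hkI : k ∈ nonFrattiniIndices U A n) :
    ∃ D, IsCoatom D ∧ U ⊔ A k ≤ D ∧ ¬ A (k + 1) ≤ D ∧ D ⊓ (S ⊔ A (k + 1)) ≤ S ⊔ A k := by
  by_cases hcov : A (k + 1) ≤ S ⊔ A k
  · obtain ⟨D, hco, hUD, hKD⟩ := not_isUFrattiniFactor_iff.1 hkI.2
    exact ⟨D, hco, hUD, hKD, inf_le_right.trans (sup_le le_sup_left hcov)⟩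
  · exact hA.exists_isCoatom_of_not_le_sup hS hkI.1 hcov

theorem exists_prefrattini_le [IsSolvable L] (hA : IsChiefSeries A n) {S : LieSubalgebra F L}
    (hS : S ∈ Omega U) : ∃ B, IsPrefrattiniWrt U A n B ∧ B ≤ S := by
  set I := nonFrattiniIndices U A n
  choose! M hM using fun k (hkI : k ∈ I) => hA.exists_isCoatom_inf_sup_le hS hkI
  have hle : ∀ k ≤ n, tailInf I M k ≤ S ⊔ A k := by
    intro k hk
    induction hk using Nat.decreasingInduction with
    | self => rw [hA.2.1, sup_top_eq]; exact le_top
    | of_succ k hk ih =>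
      by_cases hkI : k ∈ I
      · rw [tailInf_of_mem hkI]
        exact (inf_le_inf_left _ ih).trans (hM k hkI).2.2.2
      · rw [tailInf_of_not_mem hkI]
        exact ih.trans (sup_le le_sup_left (hA.le_sup_of_not_mem_nonFrattiniIndices hS hk hkI))
  refine ⟨tailInf I M 0, ⟨M, fun i hi hF => ?_, tailInf_zero _ _⟩, ?_⟩
  · obtain ⟨hco, hUM, hKM, -⟩ := hM i ⟨hi, hF⟩
    exact ⟨hco, hUM, hKM⟩
  · simpa [hA.1] using hle 0 n.zero_le

end IsChiefSeries

end Paper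

theorem stmt14 {F : Type*} [Field F] {L : Type*} [LieRing L] [LieAlgebra F L]
    [LieAlgebra.IsSolvable L] [FiniteDimensional F L]
    (U : LieSubalgebra F L) (n : ℕ) (A : ℕ → LieSubalgebra F L)
    (hA : Paper.IsChiefSeries A n) :
    {B : LieSubalgebra F L | Paper.IsPrefrattiniWrt U A n B} = Paper.OmegaMin U := by
  ext B
  constructor
  · intro hB
    refine ⟨hA.prefrattini_mem_Omega hB, fun T hT hTB => le_antisymm hTB ?_⟩
    obtain ⟨B', hB', hB'T⟩ := hA.exists_prefrattini_le hT
    exact hA.prefrattini_eq_of_le hB hB' (hB'T.trans hTB) ▸ hB'T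
  · rintro ⟨hB, hmin⟩
    obtain ⟨B', hB', hB'B⟩ := hA.exists_prefrattini_le hB
    exact hmin B' (hA.prefrattini_mem_Omega hB') hB'B ▸ hB'
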